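/- arXiv:2306.07119 — 2 statements merged into one kernel-verified Lean document; each statement's English description precedes it below -/
import Mathlib

section
/- Define g on {1,...,n}×{1,...,n} (with value +∞ where undefined) by g(1,1) = d(1,1), and g(i,j) = min(g(i-1,j), g(i-1,j-1), g(i-1,j-2)) + d(i,j), where d(i,j) = a(1+(i-1)u) + b(1+(j-1)v) for nonnegative constants a,b,u,v. Then for all i,j with 2i - j ≥ 1, g(i,j) = i(a+b) + C(i,2)·a·u + ⌊j²/4⌋·b·v, and g(i,j) = +∞ otherwise. -/
open scoped ENNReal

/-- The asymmetric DTW dynamic-programming warping matrix: `warp d 1 1 = d 1 1`, and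
`warp d i j = min (warp d (i-1) j) (min (warp d (i-1) (j-1)) (warp d (i-1) (j-2))) + d i j`,
with value `⊤ = +∞` where no valid warping path exists. -/
noncomputable def warp (d : ℕ → ℕ → ℝ≥0∞) : ℕ → ℕ → ℝ≥0∞
  | 0, _ => ⊤
  | 1, j => if j = 1 then d 1 1 else ⊤
  | (i + 2), j =>
      if j = 0 then ⊤
      else min (warp d (i + 1) j) (min (warp d (i + 1) (j - 1)) (warp d (i + 1) (j - 2)))
            + d (i + 2) j

lemma warp_zero' (d : ℕ → ℕ → ℝ≥0∞) (m : ℕ) : warp d m 0 = ⊤ := by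
  rcases m with _ | _ | m <;> simp [warp]

noncomputable def Fcf (a b u v : ℝ) (i j : ℕ) : ℝ :=
  (i:ℝ)*(a+b) + (i.choose 2 : ℝ)*a*u + ((j^2/4 : ℕ) : ℝ)*b*v

/-- For the cross-distance `d i j = a (1 + (i-1) u) + b (1 + (j-1) v)` with nonnegative
constants `a, b, u, v`, the warping matrix satisfies, for `i, j ≥ 1`:
`warp d i j = i (a + b) + C(i,2) a u + ⌊j²/4⌋ b v` whenever `2 i - j ≥ 1`, and
`warp d i j = +∞` otherwise. -/
theorem warp_closed_form (a b u v : ℝ) (ha : 0 ≤ a) (hb : 0 ≤ b) (hu : 0 ≤ u) (hv : 0 ≤ v)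
    (d : ℕ → ℕ → ℝ≥0∞)
    (hd : ∀ i j, d i j = ENNReal.ofReal (a * (1 + ((i : ℝ) - 1) * u) + b * (1 + ((j : ℝ) - 1) * v))) :
    ∀ i j : ℕ, 1 ≤ i → 1 ≤ j →
      (1 + j ≤ 2 * i →
        warp d i j = ENNReal.ofReal
          ((i : ℝ) * (a + b) + (i.choose 2 : ℝ) * a * u + ((j ^ 2 / 4 : ℕ) : ℝ) * b * v)) ∧
      (2 * i < 1 + j → warp d i j = ⊤) := by
  have hchoose : ∀ n : ℕ, (n+2).choose 2 = (n+1).choose 2 + (n+1) := by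
    intro n
    rw [Nat.choose_two_right, Nat.choose_two_right]
    rw [show n+2-1 = n+1 from rfl, show n+1-1 = n from rfl]
    rw [show (n+2)*(n+1) = (n+1)*n + (n+1)*2 by ring]
    rw [Nat.add_mul_div_right _ _ (by norm_num : 0 < 2)]
  have hfloor : ∀ k : ℕ, (k+3)^2/4 = (k+1)^2/4 + (k+2) := by
    intro k
    rw [show (k+3)^2 = (k+1)^2 + (k+2)*4 by ring]
    rw [Nat.add_mul_div_right _ _ (by norm_num : 0 < 4)]
  have hF0 : ∀ i j, 0 ≤ Fcf a b u v i j := by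
    intro i j; unfold Fcf; positivity
  have hFmono : ∀ i j₁ j₂, j₁ ≤ j₂ → Fcf a b u v i j₁ ≤ Fcf a b u v i j₂ := by
    intro i j₁ j₂ h; unfold Fcf; gcongr
  have key : ∀ i : ℕ, ∀ j : ℕ, 1 ≤ j →
      (1 + j ≤ 2 * (i+1) → warp d (i+1) j = ENNReal.ofReal (Fcf a b u v (i+1) j)) ∧
      (2 * (i+1) < 1 + j → warp d (i+1) j = ⊤) := by
    intro i
    induction i with
    | zero =>
      intro j hj
      constructor
      · intro hle
        have hj1 : j = 1 := by omega
        subst hj1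
        rw [show warp d 1 1 = d 1 1 by simp [warp], hd]
        congr 1
        unfold Fcf
        norm_num [Nat.choose]
      · intro hlt
        have hj1 : j ≠ 1 := by omega
        simp [warp, hj1]
    | succ i IH =>
      intro j hj
      have hWmono : ∀ j₁ j₂ : ℕ, 1 ≤ j₁ → j₁ ≤ j₂ →
          warp d (i+1) j₁ ≤ warp d (i+1) j₂ := by
        intro j₁ j₂ h1 h12
        rcases le_or_gt (1 + j₂) (2*(i+1)) with h | h
        · rw [(IH j₂ (by omega)).1 h, (IH j₁ h1).1 (by omega)]
          exact ENNReal.ofReal_le_ofReal (hFmono _ _ _ h12)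
        · rw [(IH j₂ (by omega)).2 h]; exact le_top
      have hwarp_eq : warp d (i+2) j =
          min (warp d (i+1) j) (min (warp d (i+1) (j-1)) (warp d (i+1) (j-2))) + d (i+2) j := by
        rw [warp, if_neg (by omega : j ≠ 0)]
      have hcast1 : ((i+2:ℕ):ℝ) - 1 = (i:ℝ) + 1 := by push_cast; ring
      obtain rfl | rfl | ⟨k, rfl⟩ : j = 1 ∨ j = 2 ∨ ∃ k, j = k + 3 := by
        rcases j with _ | _ | _ | k
        · omega
        · exact Or.inl rfl
        · exact Or.inr (Or.inl rfl)
        · exact Or.inr (Or.inr ⟨k, rfl⟩)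
      · -- j = 1
        refine ⟨fun hle => ?_, fun hlt => by omega⟩
        have h1 : warp d (i+1) 1 = ENNReal.ofReal (Fcf a b u v (i+1) 1) :=
          (IH 1 le_rfl).1 (by omega)
        rw [hwarp_eq, show (1:ℕ)-1 = 0 from rfl,
          warp_zero', min_self, min_eq_left le_top, h1, hd]
        have hD : 0 ≤ a * (1 + (((i+2:ℕ):ℝ) - 1) * u) + b * (1 + (((1:ℕ):ℝ) - 1) * v) := by
          rw [hcast1]; norm_num; positivity
        rw [← ENNReal.ofReal_add (hF0 _ _) hD]
        congr 1
        unfold Fcf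
        rw [hchoose i, hcast1]
        push_cast
        norm_num
        ring
      · -- j = 2
        refine ⟨fun hle => ?_, fun hlt => by omega⟩
        have h1 : warp d (i+1) 1 = ENNReal.ofReal (Fcf a b u v (i+1) 1) :=
          (IH 1 le_rfl).1 (by omega)
        have h2le : warp d (i+1) 1 ≤ warp d (i+1) 2 := hWmono 1 2 le_rfl (by omega)
        rw [hwarp_eq, show (2:ℕ)-1 = 1 from rfl, show (2:ℕ)-2 = 0 from rfl,
          warp_zero', min_eq_left le_top, min_eq_right h2le, h1, hd]
        have hD : 0 ≤ a * (1 + (((i+2:ℕ):ℝ) - 1) * u) + b * (1 + (((2:ℕ):ℝ) - 1) * v) := by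
          rw [hcast1]; norm_num; positivity
        rw [← ENNReal.ofReal_add (hF0 _ _) hD]
        congr 1
        unfold Fcf
        rw [hchoose i, hcast1]
        push_cast
        norm_num
        ring
      · -- j = k+3
        constructor
        · intro hle
          have h3 : warp d (i+1) (k+1) = ENNReal.ofReal (Fcf a b u v (i+1) (k+1)) :=
            (IH (k+1) (by omega)).1 (by omega)
          rw [hwarp_eq, show k+3-1 = k+2 from rfl, show k+3-2 = k+1 from rfl,
            min_eq_right (hWmono (k+1) (k+2) (by omega) (by omega)),
            min_eq_right (hWmono (k+1) (k+3) (by omega) (by omega)), h3, hd]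
          have hcast2 : ((k+3:ℕ):ℝ) - 1 = (k:ℝ) + 2 := by push_cast; ring
          have hD : 0 ≤ a * (1 + (((i+2:ℕ):ℝ) - 1) * u) + b * (1 + (((k+3:ℕ):ℝ) - 1) * v) := by
            rw [hcast1, hcast2]; positivity
          rw [← ENNReal.ofReal_add (hF0 _ _) hD]
          congr 1
          unfold Fcf
          rw [hchoose i, hfloor k, hcast1, hcast2]
          push_cast
          ring
        · intro hlt
          have t1 : warp d (i+1) (k+1) = ⊤ := (IH (k+1) (by omega)).2 (by omega)
          have t2 : warp d (i+1) (k+2) = ⊤ := (IH (k+2) (by omega)).2 (by omega)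
          have t3 : warp d (i+1) (k+3) = ⊤ := (IH (k+3) (by omega)).2 (by omega)
          rw [hwarp_eq, show k+3-1 = k+2 from rfl, show k+3-2 = k+1 from rfl,
            t1, t2, t3, min_self, min_self, top_add]
  intro i j hi hj
  rcases i with _ | i'
  · exact absurd hi (by omega)
  exact key i' j hj
end

section
/- Let X ~ ANN(α_X, σ_X²) and Y ~ ANN(α_Y, σ_Y²) be two independent centered exponential smoothing processes of equal length n. Then the asymmetric DTW distance with squared L² cross-distance d(i,j) = E[(X_i - Y_j)²] equals DTW_asym(X,Y) = σ_X²(n + C(n,2)·α_X²) + σ_Y²(n + ⌊n²/4⌋·α_Y²). -/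
open MeasureTheory ProbabilityTheory
open scoped ENNReal

/-!
Both noise sequences are centered with variance `σ²`, so independence of `X i` and `Y j` gives
`d i j = a i + b j` with `a i = E[X_i²] = σX² (1 + (i-1) αX²)` and `b j = E[Y_j²]`
nondecreasing in `j`. With a separable cost every path to `(i, j)` pays `a 1 + ⋯ + a i` on the `X` side,
so only the `Y` indices matter, and since `b` is monotone the optimal path, read backwards, lowers
`j` by 2 at every step until it reaches 1. On the diagonal this visits `n, n - 2, …` and then `1`s,
which gives `∑_{m<n} (n - 1 - 2m)₊ = ⌊n²/4⌋`; the `X` side gives `∑_{k<n} k = C(n,2)`.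
-/

open Finset

lemma min_min_eq_of_le {α : Type*} [LinearOrder α] {x y z v : α} (hx : v ≤ x) (hy : v ≤ y)
    (hz : v ≤ z) (h : x = v ∨ y = v ∨ z = v) : min x (min y z) = v := by
  rcases h with rfl | rfl | rfl <;> simp [*]

section Warp

variable (a b : ℕ → ℝ≥0∞)

/-- Cost of the warping path to `(i, j)` that, read backwards, lowers `j` by 2 at every step until
it reaches 1. -/
noncomputable def greedyWarpCost (i j : ℕ) : ℝ≥0∞ :=
  ∑ k ∈ range i, a (k + 1) + ∑ m ∈ range i, b (max 1 (j - 2 * m))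

-- `(i, j)` is reachable from `(1, 1)` exactly when `1 ≤ j ≤ 2 i - 1`.
noncomputable def warpClosedForm (i j : ℕ) : ℝ≥0∞ :=
  if 1 ≤ j ∧ j ≤ 2 * i - 1 then greedyWarpCost a b i j else ⊤

variable {a b}

lemma monotone_greedyWarpCost (hb : Monotone b) (i : ℕ) : Monotone (greedyWarpCost a b i) :=
  fun j j' h => by
    unfold greedyWarpCost
    gcongr with m
    exact hb (by omega)

lemma greedyWarpCost_succ (i : ℕ) {j : ℕ} (hj : j ≠ 0) :
    greedyWarpCost a b (i + 1) j = greedyWarpCost a b i (max 1 (j - 2)) + (a (i + 1) + b j) := by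
  have hbsum : ∑ m ∈ range (i + 1), b (max 1 (j - 2 * m)) =
      ∑ m ∈ range i, b (max 1 (max 1 (j - 2) - 2 * m)) + b j := by
    rw [sum_range_succ']
    congr 1
    · exact sum_congr rfl fun m _ => congrArg b (by omega)
    · exact congrArg b (by omega)
  rw [greedyWarpCost, greedyWarpCost, sum_range_succ, hbsum, add_add_add_comm]

lemma greedyWarpCost_le_warpClosedForm (hb : Monotone b) (i : ℕ) {k l : ℕ} (h : k ≤ max 1 l) :
    greedyWarpCost a b i k ≤ warpClosedForm a b i l := by
  unfold warpClosedForm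
  split_ifs
  · exact monotone_greedyWarpCost hb i (by omega)
  · exact le_top

lemma warpClosedForm_succ (hb : Monotone b) {i : ℕ} (hi : 1 ≤ i) {j : ℕ} (hj : j ≠ 0) :
    warpClosedForm a b (i + 1) j =
      min (warpClosedForm a b i j) (min (warpClosedForm a b i (j - 1)) (warpClosedForm a b i (j - 2)))
        + (a (i + 1) + b j) := by
  by_cases hjle : j ≤ 2 * i + 1
  · have hmin : min (warpClosedForm a b i j)
        (min (warpClosedForm a b i (j - 1)) (warpClosedForm a b i (j - 2))) =
        greedyWarpCost a b i (max 1 (j - 2)) := by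
      refine min_min_eq_of_le (greedyWarpCost_le_warpClosedForm hb i (by omega))
        (greedyWarpCost_le_warpClosedForm hb i (by omega))
        (greedyWarpCost_le_warpClosedForm hb i (by omega)) ?_
      have hval : warpClosedForm a b i (max 1 (j - 2)) = greedyWarpCost a b i (max 1 (j - 2)) :=
        if_pos (by omega)
      rcases (by omega : max 1 (j - 2) = j ∨ max 1 (j - 2) = j - 1 ∨ max 1 (j - 2) = j - 2)
        with h | h | h
      · exact Or.inl (by nth_rw 1 [← h]; exact hval)
      · exact Or.inr (Or.inl (by nth_rw 1 [← h]; exact hval))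
      · exact Or.inr (Or.inr (by nth_rw 1 [← h]; exact hval))
    rw [hmin, ← greedyWarpCost_succ i hj, warpClosedForm, if_pos (by omega)]
  · have htop : ∀ k, j - 2 ≤ k → warpClosedForm a b i k = ⊤ := fun k hk => if_neg (by omega)
    rw [htop j (by omega), htop (j - 1) (by omega), htop (j - 2) le_rfl, warpClosedForm,
      if_neg (by omega)]
    simp

theorem warp_eq_warpClosedForm (hb : Monotone b) {d : ℕ → ℕ → ℝ≥0∞}
    (hd : ∀ i j, d i j = a i + b j) {i : ℕ} (hi : 1 ≤ i) (j : ℕ) :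
    warp d i j = warpClosedForm a b i j := by
  induction i, hi using Nat.le_induction generalizing j with
  | base =>
    rw [warp, warpClosedForm]
    by_cases h : j = 1
    · subst h
      simp [greedyWarpCost, hd]
    · rw [if_neg h, if_neg (by omega)]
  | succ i hi ih =>
    obtain ⟨m, rfl⟩ : ∃ m, i = m + 1 := ⟨i - 1, by omega⟩
    rw [warp]
    split_ifs with hj
    · rw [warpClosedForm, if_neg (by omega)]
    · rw [ih, ih, ih, warpClosedForm_succ hb hi hj, hd]

theorem warp_self_eq_greedyWarpCost (hb : Monotone b) {d : ℕ → ℕ → ℝ≥0∞}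
    (hd : ∀ i j, d i j = a i + b j) {n : ℕ} (hn : 1 ≤ n) :
    warp d n n = greedyWarpCost a b n n := by
  rw [warp_eq_warpClosedForm hb hd hn, warpClosedForm, if_pos (by omega)]

end Warp

-- `i - 1` truncates at `i = 0`, consistent with `X 0 = ε 0`.
def annVariance (v α : ℝ) (i : ℕ) : ℝ := v * (1 + ((i - 1 : ℕ) : ℝ) * α ^ 2)

lemma annVariance_nonneg {v : ℝ} (hv : 0 ≤ v) (α : ℝ) (i : ℕ) : 0 ≤ annVariance v α i := by
  unfold annVariance
  positivity

lemma monotone_annVariance {v : ℝ} (hv : 0 ≤ v) (α : ℝ) : Monotone (annVariance v α) :=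
  fun i j h => by
    unfold annVariance
    gcongr

lemma sum_range_sub_one_sub_two_mul (n : ℕ) : ∑ m ∈ range n, (n - 1 - 2 * m) = n ^ 2 / 4 := by
  induction n using Nat.strong_induction_on with
  | _ n ih =>
    match n with
    | 0 => simp
    | 1 => simp
    | k + 2 =>
      have hshift : ∑ m ∈ range k, (k + 2 - 1 - 2 * (m + 1)) = ∑ m ∈ range k, (k - 1 - 2 * m) :=
        sum_congr rfl fun m _ => by omega
      rw [sum_range_succ', sum_range_succ, hshift, ih k (by omega)]
      have hsq : (k + 2) ^ 2 = k ^ 2 + 4 * (k + 1) := by ring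
      omega

lemma sum_mul_one_add_mul (v c : ℝ) (s : Finset ℕ) (f : ℕ → ℕ) :
    ∑ k ∈ s, v * (1 + (f k : ℝ) * c) = v * (#s + ((∑ k ∈ s, f k : ℕ) : ℝ) * c) := by
  simp [mul_add, sum_add_distrib, ← mul_sum, mul_comm]

lemma sum_range_annVariance_succ (v α : ℝ) (n : ℕ) :
    ∑ k ∈ range n, annVariance v α (k + 1) = v * (n + n.choose 2 * α ^ 2) := by
  refine (sum_mul_one_add_mul v (α ^ 2) (range n) fun k => k + 1 - 1).trans ?_
  simp [sum_range_id, Nat.choose_two_right]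

lemma sum_range_annVariance_max (v α : ℝ) (n : ℕ) :
    ∑ m ∈ range n, annVariance v α (max 1 (n - 2 * m)) = v * (n + (n ^ 2 / 4 : ℕ) * α ^ 2) := by
  refine (sum_mul_one_add_mul v (α ^ 2) (range n) fun m => max 1 (n - 2 * m) - 1).trans ?_
  have hterm : ∀ m ∈ range n, max 1 (n - 2 * m) - 1 = n - 1 - 2 * m := fun m _ => by omega
  rw [card_range, sum_congr rfl hterm, sum_range_sub_one_sub_two_mul]

section AnnProcess

variable {Ω : Type*} [MeasurableSpace Ω] {P : Measure Ω}

def annProcess (α : ℝ) (ε : ℕ → Ω → ℝ) (i : ℕ) (ω : Ω) : ℝ :=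
  ε i ω + α * ∑ k ∈ Ico 1 i, ε k ω

variable {ε : ℕ → Ω → ℝ}

lemma memLp_annProcess (hε : ∀ k, MemLp (ε k) 2 P) (α : ℝ) (i : ℕ) :
    MemLp (annProcess α ε i) 2 P :=
  (hε i).add ((memLp_finsetSum _ fun k _ => hε k).const_mul α)

lemma integral_annProcess (hε : ∀ k, Integrable (ε k) P) (hε0 : ∀ k, P[ε k] = 0)
    (α : ℝ) (i : ℕ) : P[annProcess α ε i] = 0 := by
  simp only [annProcess]
  rw [integral_add (hε i) ((integrable_finsetSum _ fun k _ => hε k).const_mul α),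
    integral_const_mul, integral_finsetSum _ fun k _ => hε k]
  simp [hε0]

lemma variance_annProcess (hind : iIndepFun ε P) (hε : ∀ k, MemLp (ε k) 2 P) {v : ℝ}
    (hεv : ∀ k, Var[ε k; P] = v) (α : ℝ) (i : ℕ) :
    Var[annProcess α ε i; P] = annVariance v α i := by
  have hsum : MemLp (∑ k ∈ Ico 1 i, ε k) 2 P := memLp_finsetSum' _ fun k _ => hε k
  have hindep : IndepFun (ε i) (fun ω => α * (∑ k ∈ Ico 1 i, ε k) ω) P :=
    (hind.indepFun_finsetSum_of_notMem₀ (fun k => (hε k).aemeasurable)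
      (by simp : i ∉ Ico 1 i)).symm.comp measurable_id (measurable_const_mul α)
  have hvarsum : Var[∑ k ∈ Ico 1 i, ε k; P] = (i - 1 : ℕ) * v := by
    rw [IndepFun.variance_sum (fun k _ => hε k) fun k _ l _ hkl => hind.indepFun hkl]
    simp [hεv]
  calc Var[annProcess α ε i; P]
      = Var[fun ω => ε i ω + α * (∑ k ∈ Ico 1 i, ε k) ω; P] := by
        unfold annProcess
        simp only [Finset.sum_apply]
    _ = Var[ε i; P] + α ^ 2 * Var[∑ k ∈ Ico 1 i, ε k; P] := by
        rw [hindep.variance_fun_add (hε i) (hsum.const_mul α), variance_const_mul]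
    _ = annVariance v α i := by
        rw [hεv, hvarsum, annVariance]
        ring

lemma integral_sq_sub_of_indepFun [IsFiniteMeasure P] {X Y : Ω → ℝ} (hX : MemLp X 2 P)
    (hY : MemLp Y 2 P) (hXY : IndepFun X Y P) (hX0 : P[X] = 0) (hY0 : P[Y] = 0) :
    ∫ ω, (X ω - Y ω) ^ 2 ∂P = Var[X; P] + Var[Y; P] := by
  have hmean : P[fun ω => X ω - Y ω] = 0 := by
    rw [integral_sub (hX.integrable one_le_two) (hY.integrable one_le_two), hX0, hY0, sub_zero]
  have hsub : AEMeasurable (fun ω => X ω - Y ω) P := hX.aemeasurable.sub hY.aemeasurable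
  rw [← variance_of_integral_eq_zero hsub hmean,
    variance_fun_sub hX hY, hXY.covariance_eq_zero hX hY]
  ring

lemma moments_of_map_eq_gaussianReal {e : Ω → ℝ} {v : ℝ} (hv : 0 ≤ v)
    (h : P.map e = gaussianReal 0 v.toNNReal) :
    MemLp e 2 P ∧ P[e] = 0 ∧ Var[e; P] = v := by
  have hlaw : HasLaw e (gaussianReal 0 v.toNNReal) P :=
    ⟨.of_map_ne_zero (by rw [h]; exact IsProbabilityMeasure.ne_zero _), h⟩
  refine ⟨hlaw.hasGaussianLaw.memLp_two, ?_, ?_⟩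
  · rw [hlaw.integral_eq, integral_id_gaussianReal]
  · rw [hlaw.variance_eq, variance_id_gaussianReal, Real.coe_toNNReal _ hv]

end AnnProcess

lemma greedyWarpCost_annVariance_self {vX vY : ℝ} (hvX : 0 ≤ vX) (hvY : 0 ≤ vY) (αX αY : ℝ)
    (n : ℕ) :
    greedyWarpCost (fun i => ENNReal.ofReal (annVariance vX αX i))
        (fun j => ENNReal.ofReal (annVariance vY αY j)) n n =
      ENNReal.ofReal (vX * (n + n.choose 2 * αX ^ 2) + vY * (n + (n ^ 2 / 4 : ℕ) * αY ^ 2)) := by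
  rw [greedyWarpCost, ← ENNReal.ofReal_sum_of_nonneg fun _ _ => annVariance_nonneg hvX _ _,
    ← ENNReal.ofReal_sum_of_nonneg fun _ _ => annVariance_nonneg hvY _ _,
    sum_range_annVariance_succ, sum_range_annVariance_max, ENNReal.ofReal_add (by positivity)
    (by positivity)]

theorem dtw_asym_ann_general
    {Ω : Type*} [MeasurableSpace Ω] (P : Measure Ω) [IsProbabilityMeasure P]
    (n : ℕ) (hn : 1 ≤ n)
    (αX αY σX σY : ℝ)
    (ε η : ℕ → Ω → ℝ)
    (hindepε : iIndepFun ε P)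
    (hindepη : iIndepFun η P)
    (hgaussε : ∀ i, Measure.map (ε i) P = gaussianReal 0 (Real.toNNReal (σX ^ 2)))
    (hgaussη : ∀ i, Measure.map (η i) P = gaussianReal 0 (Real.toNNReal (σY ^ 2)))
    (X Y : ℕ → Ω → ℝ)
    (hX : ∀ i ω, X i ω = ε i ω + αX * ∑ k ∈ Finset.Ico 1 i, ε k ω)
    (hY : ∀ j ω, Y j ω = η j ω + αY * ∑ k ∈ Finset.Ico 1 j, η k ω)
    (hXY : ∀ i j, IndepFun (X i) (Y j) P)
    (d : ℕ → ℕ → ℝ≥0∞)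
    (hd : ∀ i j, d i j = ENNReal.ofReal (∫ ω, (X i ω - Y j ω) ^ 2 ∂P)) :
    warp d n n = ENNReal.ofReal
      (σX ^ 2 * ((n : ℝ) + (n.choose 2 : ℝ) * αX ^ 2)
        + σY ^ 2 * ((n : ℝ) + ((n ^ 2 / 4 : ℕ) : ℝ) * αY ^ 2)) := by
  choose hεL2 hε0 hεv using fun k => moments_of_map_eq_gaussianReal (sq_nonneg σX) (hgaussε k)
  choose hηL2 hη0 hηv using fun k => moments_of_map_eq_gaussianReal (sq_nonneg σY) (hgaussη k)
  obtain rfl : X = annProcess αX ε := funext fun i => funext (hX i)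
  obtain rfl : Y = annProcess αY η := funext fun j => funext (hY j)
  have hdist : ∀ i j, d i j =
      ENNReal.ofReal (annVariance (σX ^ 2) αX i) + ENNReal.ofReal (annVariance (σY ^ 2) αY j) := by
    intro i j
    rw [hd, integral_sq_sub_of_indepFun (memLp_annProcess hεL2 αX i) (memLp_annProcess hηL2 αY j)
      (hXY i j) (integral_annProcess (fun k => (hεL2 k).integrable one_le_two) hε0 αX i)
      (integral_annProcess (fun k => (hηL2 k).integrable one_le_two) hη0 αY j),
      variance_annProcess hindepε hεL2 hεv, variance_annProcess hindepη hηL2 hηv,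
      ENNReal.ofReal_add (annVariance_nonneg (sq_nonneg σX) _ _)
        (annVariance_nonneg (sq_nonneg σY) _ _)]
  have hmono : Monotone fun j => ENNReal.ofReal (annVariance (σY ^ 2) αY j) :=
    fun _ _ h => ENNReal.ofReal_le_ofReal (monotone_annVariance (sq_nonneg σY) αY h)
  rw [warp_self_eq_greedyWarpCost hmono hdist hn,
    greedyWarpCost_annVariance_self (sq_nonneg σX) (sq_nonneg σY)]

/-- For two independent centered ANN (exponential smoothing) processes of equal length `n`,
the asymmetric DTW distance with squared `L²` cross-distance `d(i,j) = E[(X i - Y j)²]` equals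
`σX² (n + C(n,2) αX²) + σY² (n + ⌊n²/4⌋ αY²)`. -/
theorem dtw_asym_ann
    {Ω : Type*} [MeasurableSpace Ω] (P : Measure Ω) [IsProbabilityMeasure P]
    (n : ℕ) (hn : 1 ≤ n)
    (αX αY σX σY : ℝ) (hσX : 0 < σX) (hσY : 0 < σY)
    (ε η : ℕ → Ω → ℝ) (hmε : ∀ i, Measurable (ε i)) (hmη : ∀ i, Measurable (η i))
    (hindepε : iIndepFun ε P)
    (hindepη : iIndepFun η P)
    (hgaussε : ∀ i, Measure.map (ε i) P = gaussianReal 0 (Real.toNNReal (σX ^ 2)))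
    (hgaussη : ∀ i, Measure.map (η i) P = gaussianReal 0 (Real.toNNReal (σY ^ 2)))
    (X Y : ℕ → Ω → ℝ)
    (hX : ∀ i ω, X i ω = ε i ω + αX * ∑ k ∈ Finset.Ico 1 i, ε k ω)
    (hY : ∀ j ω, Y j ω = η j ω + αY * ∑ k ∈ Finset.Ico 1 j, η k ω)
    (hXY : ∀ i j, IndepFun (X i) (Y j) P)
    (d : ℕ → ℕ → ℝ≥0∞)
    (hd : ∀ i j, d i j = ENNReal.ofReal (∫ ω, (X i ω - Y j ω) ^ 2 ∂P)) :
    warp d n n = ENNReal.ofReal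
      (σX ^ 2 * ((n : ℝ) + (n.choose 2 : ℝ) * αX ^ 2)
        + σY ^ 2 * ((n : ℝ) + ((n ^ 2 / 4 : ℕ) : ℝ) * αY ^ 2)) :=
  dtw_asym_ann_general P n hn αX αY σX σY ε η hindepε hindepη hgaussε hgaussη X Y hX hY hXY d hd
end
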